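/- Let ρ : ℝ² → ℝ be smooth, compactly supported with ∫ρ = 1, let P be the heat kernel on ℝ vanishing for t ≤ 0, and suppose ρ_δ^{(2)}(t,x) = δ^{-1}1_{|t|<δ}g(x) pointwise-bounds the rescaled mollifier, i.e. |(ρ⋆ρ)_δ(t,x)| ≤ C δ^{-1} 1_{|t|≤Cδ}(t) h(x) with h integrable. Then the constant c_ρ^{(1,1)}(δ) = ∫ P(z₁)P(z₂)P(z₃) ρ_δ^{(2)}(z₁+z₂) ρ_δ^{(2)}(z₂+z₃) dz₁dz₂dz₃, with temporal regularisation ρ_δ^{(2)}(t,x) = δ^{-1}(ρ⋆ρ)(δ^{-1}t,x), satisfies |c_ρ^{(1,1)}(δ)| ≤ Cδ for some constant C; in particular it converges to 0 as δ → 0. -/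

import Mathlib

open MeasureTheory Real

/-- The heat kernel on `ℝ` as a space-time kernel, vanishing for `t ≤ 0`. -/
noncomputable def heatKernelST (z : ℝ × ℝ) : ℝ :=
  if 0 < z.1 then (Real.sqrt (4 * Real.pi * z.1))⁻¹ * Real.exp (-(z.2 ^ 2) / (4 * z.1)) else 0

/-- Space-time convolution on `ℝ²`. -/
noncomputable def convST (f g : ℝ × ℝ → ℝ) (z : ℝ × ℝ) : ℝ := ∫ w : ℝ × ℝ, f w * g (z - w)

/-- The temporally rescaled mollifier `ρ_δ⁽²⁾(t,x) = δ⁻¹ (ρ⋆ρ)(δ⁻¹t, x)`. -/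
noncomputable def tempRescale (ρ : ℝ × ℝ → ℝ) (δ : ℝ) (z : ℝ × ℝ) : ℝ :=
  δ⁻¹ * convST ρ ρ (z.1 / δ, z.2)


lemma hk_nonneg (z : ℝ × ℝ) : 0 ≤ heatKernelST z := by
  unfold heatKernelST
  split
  · positivity
  · exact le_rfl

lemma hk_meas : Measurable heatKernelST := by
  unfold heatKernelST
  apply Measurable.ite (measurableSet_lt measurable_const measurable_fst)
  · fun_prop
  · exact measurable_const

lemma hk_eq {t : ℝ} (ht : 0 < t) (x : ℝ) :
    heatKernelST (t, x) = (Real.sqrt (4 * π * t))⁻¹ * Real.exp (-(4*t)⁻¹ * x ^ 2) := by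
  simp only [heatKernelST, if_pos ht]
  congr 1
  ring

lemma hk_integrable_x {t : ℝ} (ht : 0 < t) :
    Integrable (fun x => heatKernelST (t, x)) := by
  have h4t : (0:ℝ) < (4*t)⁻¹ := by positivity
  simp only [hk_eq ht]
  exact (integrable_exp_neg_mul_sq h4t).const_mul _

lemma hk_integral_x {t : ℝ} (ht : 0 < t) : ∫ x, heatKernelST (t, x) = 1 := by
  simp only [hk_eq ht]
  rw [integral_const_mul, integral_gaussian]
  have h1 : π / (4*t)⁻¹ = 4 * π * t := by
    field_simp
  rw [h1]
  have : Real.sqrt (4 * π * t) ≠ 0 := by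
    positivity
  field_simp

/-- The key one-level estimate: heat kernel times a time-indicator of an
interval of length `≤ 2T` (intersected with `t>0` it lies in `(0,T]` when `0 ≤ s`)
times a spatial factor bounded by 1, is integrable with integral at most `T`. -/
lemma key (T : ℝ) (hT : 0 < T) (s : ℝ) (hs : 0 ≤ s) (φ : ℝ → ℝ)
    (hφm : Measurable φ) (hφ0 : ∀ x, 0 ≤ φ x) (hφ1 : ∀ x, φ x ≤ 1) :
    Integrable (fun z : ℝ × ℝ => heatKernelST z * (if |s + z.1| ≤ T then 1 else 0) * φ z.2)
    ∧ ∫ z : ℝ × ℝ, heatKernelST z * (if |s + z.1| ≤ T then 1 else 0) * φ z.2 ≤ T := by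
  set F : ℝ × ℝ → ℝ := fun z =>
    heatKernelST z * (if z.1 ∈ Set.Ioc (0:ℝ) T then 1 else 0) * φ z.2 with hF
  set M : ℝ × ℝ → ℝ := fun z =>
    heatKernelST z * (if |s + z.1| ≤ T then 1 else 0) * φ z.2 with hM
  have hFmeas : Measurable F := by
    apply Measurable.mul
    apply Measurable.mul hk_meas
    · exact Measurable.ite (measurableSet_Ioc.preimage measurable_fst) measurable_const
        measurable_const
    · exact hφm.comp measurable_snd
  have hMmeas : Measurable M := by
    apply Measurable.mul
    apply Measurable.mul hk_meas
    · apply Measurable.ite _ measurable_const measurable_const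
      exact measurableSet_le ((measurable_const.add measurable_fst).abs) measurable_const
    · exact hφm.comp measurable_snd
  have hFnonneg : ∀ z, 0 ≤ F z := by
    intro z
    apply mul_nonneg (mul_nonneg (hk_nonneg z) _) (hφ0 _)
    split <;> norm_num
  have hMnonneg : ∀ z, 0 ≤ M z := by
    intro z
    apply mul_nonneg (mul_nonneg (hk_nonneg z) _) (hφ0 _)
    split <;> norm_num
  have hMF : ∀ z, M z ≤ F z := by
    intro z
    by_cases h1 : 0 < z.1
    · by_cases h2 : |s + z.1| ≤ T
      · have h3 : z.1 ∈ Set.Ioc (0:ℝ) T := by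
          constructor
          · exact h1
          · calc z.1 ≤ s + z.1 := by linarith
              _ ≤ |s + z.1| := le_abs_self _
              _ ≤ T := h2
        simp only [hM, hF, if_pos h2, if_pos h3]
        exact le_rfl
      · simp only [hM, hF, if_neg h2, mul_zero, zero_mul]
        exact hFnonneg z
    · have : heatKernelST z = 0 := by simp [heatKernelST, h1]
      simp only [hM, hF, this, zero_mul]
      exact le_rfl
  -- spatial integral of F(t,·) for fixed t
  have hFtx : ∀ t : ℝ, t ∉ Set.Ioc (0:ℝ) T → (fun x => F (t, x)) = (fun _ => (0:ℝ)) := by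
    intro t ht
    funext x
    simp only [hF, if_neg ht, mul_zero, zero_mul]
  have hFt_int : ∀ t : ℝ, Integrable (fun x => F (t, x)) := by
    intro t
    by_cases ht : t ∈ Set.Ioc (0:ℝ) T
    · simp only [hF, if_pos ht, mul_one]
      apply (hk_integrable_x ht.1).mono' ((hk_meas.comp (measurable_prodMk_left)).mul
        hφm).aestronglyMeasurable
      filter_upwards with x
      show ‖heatKernelST (t, x) * φ x‖ ≤ heatKernelST (t, x)
      rw [Real.norm_eq_abs, abs_mul, abs_of_nonneg (hk_nonneg (t, x))]
      calc heatKernelST (t,x) * |φ x| ≤ heatKernelST (t,x) * 1 := by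
            apply mul_le_mul_of_nonneg_left _ (hk_nonneg _)
            rw [abs_le]; exact ⟨by linarith [hφ0 x, hφ1 x], hφ1 x⟩
        _ = heatKernelST (t,x) := mul_one _
    · rw [hFtx t ht]; exact integrable_zero _ _ _
  have hFt_le : ∀ t : ℝ, ∫ x, F (t, x) ≤ Set.indicator (Set.Ioc (0:ℝ) T) (fun _ => (1:ℝ)) t := by
    intro t
    by_cases ht : t ∈ Set.Ioc (0:ℝ) T
    · rw [Set.indicator_of_mem ht]
      calc ∫ x, F (t, x) ≤ ∫ x, heatKernelST (t, x) := by
            apply integral_mono (hFt_int t) (hk_integrable_x ht.1)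
            intro x
            simp only [hF, if_pos ht, mul_one]
            calc heatKernelST (t,x) * φ x ≤ heatKernelST (t,x) * 1 :=
                  mul_le_mul_of_nonneg_left (hφ1 x) (hk_nonneg _)
              _ = heatKernelST (t,x) := mul_one _
        _ = 1 := hk_integral_x ht.1
    · rw [hFtx t ht, Set.indicator_of_notMem ht]
      simp
  have hind_int : Integrable (Set.indicator (Set.Ioc (0:ℝ) T) (fun _ => (1:ℝ))) := by
    apply IntegrableOn.integrable_indicator _ measurableSet_Ioc
    exact integrableOn_const (by simp [Real.volume_Ioc])
  have hind_val : ∫ t, Set.indicator (Set.Ioc (0:ℝ) T) (fun _ => (1:ℝ)) t = T := by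
    rw [integral_indicator_const (1:ℝ) measurableSet_Ioc]
    simp [Real.volume_Ioc, ENNReal.toReal_ofReal hT.le, hT.le]
  -- integrability of F on the product space
  have hFint : Integrable F := by
    rw [MeasureTheory.Measure.volume_eq_prod]
    rw [integrable_prod_iff (hFmeas.aestronglyMeasurable)]
    constructor
    · filter_upwards with t; exact hFt_int t
    · apply hind_int.mono'
      · exact (StronglyMeasurable.integral_prod_right (f := fun t x => ‖F (t, x)‖)
          (hFmeas.stronglyMeasurable.norm)).aestronglyMeasurable
      · filter_upwards with t
        rw [Real.norm_eq_abs, abs_of_nonneg (integral_nonneg (fun x => norm_nonneg _))]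
        have : (fun x => ‖F (t, x)‖) = fun x => F (t, x) := by
          funext x; rw [Real.norm_eq_abs, abs_of_nonneg (hFnonneg _)]
        rw [this]
        exact hFt_le t
  have hFval : ∫ z, F z ≤ T := by
    rw [MeasureTheory.Measure.volume_eq_prod, integral_prod F hFint]
    calc ∫ t, ∫ x, F (t, x) ≤ ∫ t, Set.indicator (Set.Ioc (0:ℝ) T) (fun _ => (1:ℝ)) t := by
          apply integral_mono _ hind_int hFt_le
          have := hFint
          rw [MeasureTheory.Measure.volume_eq_prod] at this
          exact this.integral_prod_left
      _ = T := hind_val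
  have hMint : Integrable M := by
    apply hFint.mono' hMmeas.aestronglyMeasurable
    filter_upwards with z
    rw [Real.norm_eq_abs, abs_of_nonneg (hMnonneg z)]
    exact hMF z
  exact ⟨hMint, le_trans (integral_mono hMint hFint hMF) hFval⟩

lemma conv_bound (ρ : ℝ × ℝ → ℝ) (hc : Continuous ρ) (hsupp : HasCompactSupport ρ) :
    ∃ M₀ a : ℝ, 0 ≤ M₀ ∧ 0 < a ∧
      ∀ z, |convST ρ ρ z| ≤ M₀ ∧ (convST ρ ρ z ≠ 0 → |z.1| ≤ a ∧ |z.2| ≤ a) := by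
  obtain ⟨B, hB⟩ := hc.bounded_above_of_compact_support hsupp
  have hB0 : 0 ≤ B := le_trans (norm_nonneg _) (hB 0)
  have hρint : Integrable ρ := hc.integrable_of_hasCompactSupport hsupp
  obtain ⟨r, hr⟩ := (hsupp.isBounded).subset_closedBall 0
  refine ⟨B * ∫ w, ‖ρ w‖, 2 * |r| + 1, by positivity, by positivity, fun z => ⟨?_, ?_⟩⟩
  · calc |convST ρ ρ z| ≤ ∫ w, ‖ρ w * ρ (z - w)‖ := by
          rw [← Real.norm_eq_abs]
          exact norm_integral_le_integral_norm _
      _ ≤ ∫ w, B * ‖ρ w‖ := by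
          apply integral_mono_of_nonneg
          · filter_upwards with w; exact norm_nonneg _
          · exact hρint.norm.const_mul B
          · filter_upwards with w
            rw [norm_mul, mul_comm]
            exact mul_le_mul_of_nonneg_right (hB _) (norm_nonneg _)
      _ = B * ∫ w, ‖ρ w‖ := integral_const_mul B _
  · intro hne
    have : ∃ w, ρ w * ρ (z - w) ≠ 0 := by
      by_contra hall
      push_neg at hall
      apply hne
      unfold convST
      simp only [hall, integral_zero]
    obtain ⟨w, hw⟩ := this
    have hw1 : ρ w ≠ 0 := fun h => hw (by simp [h])
    have hw2 : ρ (z - w) ≠ 0 := fun h => hw (by simp [h])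
    have hmem1 : w ∈ Metric.closedBall 0 r := hr (subset_tsupport _ (by simpa using hw1))
    have hmem2 : z - w ∈ Metric.closedBall 0 r := hr (subset_tsupport _ (by simpa using hw2))
    rw [Metric.mem_closedBall, dist_zero_right] at hmem1 hmem2
    have hz : ‖z‖ ≤ 2 * |r| := by
      calc ‖z‖ = ‖(z - w) + w‖ := by ring_nf
        _ ≤ ‖z - w‖ + ‖w‖ := norm_add_le _ _
        _ ≤ r + r := add_le_add hmem2 hmem1
        _ ≤ 2 * |r| := by have := le_abs_self r; linarith
    constructor
    · calc |z.1| = ‖z.1‖ := rfl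
        _ ≤ ‖z‖ := norm_fst_le z
        _ ≤ 2 * |r| + 1 := by linarith
    · calc |z.2| = ‖z.2‖ := rfl
        _ ≤ ‖z‖ := norm_snd_le z
        _ ≤ 2 * |r| + 1 := by linarith


/-- Under a pointwise domination `|ρ_δ⁽²⁾(t,x)| ≤ C δ⁻¹ 1_{|t|≤Cδ} h(x)` with `h`
integrable, the constant
`c_ρ^{(1,1)}(δ) = ∫ P(z₁)P(z₂)P(z₃) ρ_δ⁽²⁾(z₁+z₂) ρ_δ⁽²⁾(z₂+z₃) dz₁dz₂dz₃`
satisfies `|c_ρ^{(1,1)}(δ)| ≤ C' δ`, so it converges to `0` as `δ → 0`. -/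
theorem crho11_temporal_bound (ρ : ℝ × ℝ → ℝ)
    (hsmooth : ContDiff ℝ (⊤ : ℕ∞) ρ) (hsupp : HasCompactSupport ρ)
    (hint : ∫ z : ℝ × ℝ, ρ z = 1)
    (C : ℝ) (hC : 0 < C) (h : ℝ → ℝ) (hh : Integrable h) (hhpos : ∀ x, 0 ≤ h x)
    (hdom : ∀ δ ∈ Set.Ioc (0 : ℝ) 1, ∀ t x : ℝ,
      |tempRescale ρ δ (t, x)| ≤ C * δ⁻¹ * (if |t| ≤ C * δ then 1 else 0) * h x) :
    ∃ C' : ℝ, ∀ δ ∈ Set.Ioc (0 : ℝ) 1,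
      |∫ z₁ : ℝ × ℝ, ∫ z₂ : ℝ × ℝ, ∫ z₃ : ℝ × ℝ,
          heatKernelST z₁ * heatKernelST z₂ * heatKernelST z₃ *
            tempRescale ρ δ (z₁ + z₂) * tempRescale ρ δ (z₂ + z₃)|
        ≤ C' * δ := by
  obtain ⟨M₀, a, hM₀, ha, hconv⟩ := conv_bound ρ hsmooth.continuous hsupp
  refine ⟨M₀^2 * a^3, ?_⟩
  rintro δ ⟨hδ0, hδ1⟩
  have hδne : δ ≠ 0 := ne_of_gt hδ0
  set R := tempRescale ρ δ with hRdef
  set T := a * δ with hTdef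
  have hT : 0 < T := by positivity
  -- pointwise bound on R
  have hRb : ∀ z : ℝ × ℝ, |R z| ≤
      δ⁻¹ * M₀ * (if |z.1| ≤ T then 1 else 0) * (if |z.2| ≤ a then 1 else 0) := by
    intro z
    by_cases hz : convST ρ ρ (z.1 / δ, z.2) = 0
    · have : R z = 0 := by rw [hRdef]; unfold tempRescale; rw [hz, mul_zero]
      rw [this, abs_zero]
      have h0 : (0:ℝ) ≤ (if |z.1| ≤ T then (1:ℝ) else 0) := by split <;> norm_num
      have h0' : (0:ℝ) ≤ (if |z.2| ≤ a then (1:ℝ) else 0) := by split <;> norm_num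
      positivity
    · obtain ⟨hb, hsup⟩ := hconv (z.1 / δ, z.2)
      obtain ⟨e1, e2⟩ := hsup hz
      simp only at e1 e2
      have hz1 : |z.1| ≤ T := by
        rw [abs_div, abs_of_pos hδ0, div_le_iff₀ hδ0] at e1
        rw [hTdef]; linarith
      rw [if_pos hz1, if_pos e2, mul_one, mul_one]
      have : |R z| = δ⁻¹ * |convST ρ ρ (z.1 / δ, z.2)| := by
        rw [hRdef]; unfold tempRescale
        rw [abs_mul, abs_inv, abs_of_pos hδ0]
      rw [this]
      exact mul_le_mul_of_nonneg_left hb (by positivity)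
  -- level 3
  have claim3 : ∀ z₁ z₂ : ℝ × ℝ,
      |∫ z₃ : ℝ × ℝ, heatKernelST z₁ * heatKernelST z₂ * heatKernelST z₃ *
          R (z₁ + z₂) * R (z₂ + z₃)|
        ≤ heatKernelST z₁ * heatKernelST z₂ * |R (z₁ + z₂)| * (M₀ * a) := by
    intro z₁ z₂
    by_cases h2 : 0 < z₂.1
    · set c : ℝ := heatKernelST z₁ * heatKernelST z₂ * |R (z₁ + z₂)| * (δ⁻¹ * M₀) with hc
      have hc0 : 0 ≤ c := by
        apply mul_nonneg (mul_nonneg (mul_nonneg (hk_nonneg _) (hk_nonneg _)) (abs_nonneg _))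
        positivity
      set φ : ℝ → ℝ := fun x => if |z₂.2 + x| ≤ a then 1 else 0 with hφ
      have hφm : Measurable φ := Measurable.ite
        (measurableSet_le ((measurable_const.add measurable_id).abs) measurable_const)
        measurable_const measurable_const
      have hφ0 : ∀ x, 0 ≤ φ x := by intro x; rw [hφ]; dsimp only; split <;> norm_num
      have hφ1 : ∀ x, φ x ≤ 1 := by intro x; rw [hφ]; dsimp only; split <;> norm_num
      obtain ⟨hkint, hkval⟩ := key T hT z₂.1 h2.le φ hφm hφ0 hφ1
      rw [← Real.norm_eq_abs]
      calc ‖∫ z₃ : ℝ × ℝ, heatKernelST z₁ * heatKernelST z₂ * heatKernelST z₃ *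
              R (z₁ + z₂) * R (z₂ + z₃)‖
          ≤ ∫ z₃ : ℝ × ℝ, c * (heatKernelST z₃ *
              (if |z₂.1 + z₃.1| ≤ T then 1 else 0) * φ z₃.2) := by
            apply norm_integral_le_of_norm_le (hkint.const_mul c)
            filter_upwards with z₃
            rw [Real.norm_eq_abs]
            have hb3 := hRb (z₂ + z₃)
            calc |heatKernelST z₁ * heatKernelST z₂ * heatKernelST z₃ *
                  R (z₁ + z₂) * R (z₂ + z₃)|
                = heatKernelST z₁ * heatKernelST z₂ * |R (z₁ + z₂)| *
                  (heatKernelST z₃ * |R (z₂ + z₃)|) := by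
                  rw [abs_mul, abs_mul, abs_mul, abs_mul,
                    abs_of_nonneg (hk_nonneg z₁), abs_of_nonneg (hk_nonneg z₂),
                    abs_of_nonneg (hk_nonneg z₃)]
                  ring
              _ ≤ heatKernelST z₁ * heatKernelST z₂ * |R (z₁ + z₂)| *
                  (heatKernelST z₃ * (δ⁻¹ * M₀ * (if |(z₂ + z₃).1| ≤ T then 1 else 0) *
                    (if |(z₂ + z₃).2| ≤ a then 1 else 0))) := by
                  apply mul_le_mul_of_nonneg_left _
                    (mul_nonneg (mul_nonneg (hk_nonneg _) (hk_nonneg _)) (abs_nonneg _))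
                  exact mul_le_mul_of_nonneg_left hb3 (hk_nonneg z₃)
              _ = c * (heatKernelST z₃ * (if |z₂.1 + z₃.1| ≤ T then 1 else 0) * φ z₃.2) := by
                  simp only [Prod.fst_add, Prod.snd_add, hφ, hc]
                  ring
        _ = c * ∫ z₃ : ℝ × ℝ, heatKernelST z₃ *
              (if |z₂.1 + z₃.1| ≤ T then 1 else 0) * φ z₃.2 := integral_const_mul c _
        _ ≤ c * T := mul_le_mul_of_nonneg_left hkval hc0
        _ = heatKernelST z₁ * heatKernelST z₂ * |R (z₁ + z₂)| * (δ⁻¹ * M₀ * (a * δ)) := by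
            rw [hc, hTdef]; ring
        _ = heatKernelST z₁ * heatKernelST z₂ * |R (z₁ + z₂)| * (M₀ * a) := by
            have : δ⁻¹ * M₀ * (a * δ) = M₀ * a := by field_simp
            rw [this]
    · have hQ2 : heatKernelST z₂ = 0 := by simp [heatKernelST, h2]
      simp only [hQ2, mul_zero, zero_mul, integral_zero, abs_zero]
      exact le_rfl
  -- level 2
  have claim2 : ∀ z₁ : ℝ × ℝ,
      |∫ z₂ : ℝ × ℝ, ∫ z₃ : ℝ × ℝ, heatKernelST z₁ * heatKernelST z₂ * heatKernelST z₃ *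
          R (z₁ + z₂) * R (z₂ + z₃)|
        ≤ (M₀^2 * a^2) * (heatKernelST z₁ * (if |(0:ℝ) + z₁.1| ≤ T then 1 else 0) * 1) := by
    intro z₁
    by_cases h1 : 0 < z₁.1
    · set c : ℝ := heatKernelST z₁ * (if |z₁.1| ≤ T then 1 else 0) * (M₀ * a) * (δ⁻¹ * M₀)
        with hc
      have hi0 : (0:ℝ) ≤ (if |z₁.1| ≤ T then (1:ℝ) else 0) := by split <;> norm_num
      have hc0 : 0 ≤ c := by
        apply mul_nonneg (mul_nonneg (mul_nonneg (hk_nonneg _) hi0) (by positivity))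
        positivity
      set φ : ℝ → ℝ := fun x => if |z₁.2 + x| ≤ a then 1 else 0 with hφ
      have hφm : Measurable φ := Measurable.ite
        (measurableSet_le ((measurable_const.add measurable_id).abs) measurable_const)
        measurable_const measurable_const
      have hφ0 : ∀ x, 0 ≤ φ x := by intro x; rw [hφ]; dsimp only; split <;> norm_num
      have hφ1 : ∀ x, φ x ≤ 1 := by intro x; rw [hφ]; dsimp only; split <;> norm_num
      obtain ⟨hkint, hkval⟩ := key T hT z₁.1 h1.le φ hφm hφ0 hφ1
      -- insertion of the indicator for z₁.1
      have hins : ∀ z₂ : ℝ × ℝ,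
          heatKernelST z₂ * (if |z₁.1 + z₂.1| ≤ T then 1 else 0)
            ≤ (if |z₁.1| ≤ T then 1 else 0) *
              (heatKernelST z₂ * (if |z₁.1 + z₂.1| ≤ T then 1 else 0)) := by
        intro z₂
        by_cases h2 : 0 < z₂.1
        · by_cases hi : |z₁.1 + z₂.1| ≤ T
          · have : |z₁.1| ≤ T := by
              rw [abs_of_pos h1]
              calc z₁.1 ≤ z₁.1 + z₂.1 := by linarith
                _ ≤ |z₁.1 + z₂.1| := le_abs_self _
                _ ≤ T := hi
            rw [if_pos this, one_mul]
          · rw [if_neg hi, mul_zero, mul_zero]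
        · have hQ2 : heatKernelST z₂ = 0 := by simp [heatKernelST, h2]
          rw [hQ2, zero_mul, mul_zero]
      rw [← Real.norm_eq_abs]
      calc ‖∫ z₂ : ℝ × ℝ, ∫ z₃ : ℝ × ℝ, heatKernelST z₁ * heatKernelST z₂ * heatKernelST z₃ *
              R (z₁ + z₂) * R (z₂ + z₃)‖
          ≤ ∫ z₂ : ℝ × ℝ, c * (heatKernelST z₂ *
              (if |z₁.1 + z₂.1| ≤ T then 1 else 0) * φ z₂.2) := by
            apply norm_integral_le_of_norm_le (hkint.const_mul c)
            filter_upwards with z₂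
            rw [Real.norm_eq_abs]
            have hb2 := hRb (z₁ + z₂)
            calc |∫ z₃ : ℝ × ℝ, heatKernelST z₁ * heatKernelST z₂ * heatKernelST z₃ *
                  R (z₁ + z₂) * R (z₂ + z₃)|
                ≤ heatKernelST z₁ * heatKernelST z₂ * |R (z₁ + z₂)| * (M₀ * a) := claim3 z₁ z₂
              _ = (heatKernelST z₁ * (M₀ * a) * heatKernelST z₂) * |R (z₁ + z₂)| := by ring
              _ ≤ (heatKernelST z₁ * (M₀ * a) * heatKernelST z₂) *
                  (δ⁻¹ * M₀ * (if |(z₁ + z₂).1| ≤ T then 1 else 0) *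
                    (if |(z₁ + z₂).2| ≤ a then 1 else 0)) := by
                  apply mul_le_mul_of_nonneg_left hb2
                  apply mul_nonneg (mul_nonneg (hk_nonneg _) (by positivity)) (hk_nonneg _)
              _ = (heatKernelST z₁ * (M₀ * a) * (δ⁻¹ * M₀) * φ z₂.2) *
                  (heatKernelST z₂ * (if |z₁.1 + z₂.1| ≤ T then 1 else 0)) := by
                  simp only [Prod.fst_add, Prod.snd_add, hφ]
                  ring
              _ ≤ (heatKernelST z₁ * (M₀ * a) * (δ⁻¹ * M₀) * φ z₂.2) *
                  ((if |z₁.1| ≤ T then 1 else 0) *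
                    (heatKernelST z₂ * (if |z₁.1 + z₂.1| ≤ T then 1 else 0))) := by
                  apply mul_le_mul_of_nonneg_left (hins z₂)
                  apply mul_nonneg (mul_nonneg (mul_nonneg (hk_nonneg _) (by positivity))
                    (by positivity)) (hφ0 _)
              _ = c * (heatKernelST z₂ * (if |z₁.1 + z₂.1| ≤ T then 1 else 0) * φ z₂.2) := by
                  rw [hc]; ring
        _ = c * ∫ z₂ : ℝ × ℝ, heatKernelST z₂ *
              (if |z₁.1 + z₂.1| ≤ T then 1 else 0) * φ z₂.2 := integral_const_mul c _
        _ ≤ c * T := mul_le_mul_of_nonneg_left hkval hc0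
        _ = heatKernelST z₁ * (if |z₁.1| ≤ T then 1 else 0) * (M₀ * a) * (δ⁻¹ * M₀) * (a * δ)
            := by rw [hc, hTdef]
        _ = (M₀^2 * a^2) * (heatKernelST z₁ * (if |(0:ℝ) + z₁.1| ≤ T then 1 else 0) * 1) := by
            rw [zero_add]
            field_simp
    · have hQ1 : heatKernelST z₁ = 0 := by simp [heatKernelST, h1]
      simp only [hQ1, zero_mul, mul_zero, integral_zero, abs_zero]
      exact le_rfl
  -- level 1
  obtain ⟨k1int, k1val⟩ := key T hT 0 le_rfl (fun _ => 1) measurable_const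
    (fun _ => zero_le_one) (fun _ => le_rfl)
  rw [← Real.norm_eq_abs]
  calc ‖∫ z₁ : ℝ × ℝ, ∫ z₂ : ℝ × ℝ, ∫ z₃ : ℝ × ℝ, heatKernelST z₁ * heatKernelST z₂ *
          heatKernelST z₃ * R (z₁ + z₂) * R (z₂ + z₃)‖
      ≤ ∫ z₁ : ℝ × ℝ, (M₀^2 * a^2) *
          (heatKernelST z₁ * (if |(0:ℝ) + z₁.1| ≤ T then 1 else 0) * 1) := by
        apply norm_integral_le_of_norm_le (k1int.const_mul (M₀^2 * a^2))
        filter_upwards with z₁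
        rw [Real.norm_eq_abs]
        exact claim2 z₁
    _ = (M₀^2 * a^2) * ∫ z₁ : ℝ × ℝ,
          heatKernelST z₁ * (if |(0:ℝ) + z₁.1| ≤ T then 1 else 0) * 1 :=
        integral_const_mul _ _
    _ ≤ (M₀^2 * a^2) * T := by
        apply mul_le_mul_of_nonneg_left _ (by positivity)
        exact k1val
    _ = M₀^2 * a^3 * δ := by rw [hTdef]; ring
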